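/- Let x̂, x̃, x_o ∈ ℝ^n have entries in [x_min, x_max] with 0 < x_min ≤ x_max, and let A be an m×n real matrix such that Σ̂ = (A X̂² Aᵀ)^{-1} and Σ̃ = (A X̃² Aᵀ)^{-1} exist, where X̂ = diag(x̂), X̃ = diag(x̃), X_o = diag(x_o). Let w₁,…,w_L ∈ ℝ^n and y_ℓ = A X_o w_ℓ. Then |(1/(L σ_w²)) Σ_{ℓ=1}^L y_ℓᵀ (Σ̂ − Σ̃) y_ℓ| ≤ (x_max² λ_max²(AAᵀ) ‖x̂² − x̃²‖_∞ / (x_min⁴ λ_min²(AAᵀ))) · (1 + (1/(L σ_w²)) Σ_{ℓ=1}^L w_ℓᵀ w_ℓ). -/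

import Mathlib

/-!
Write `M̂ = A X̂² Aᵀ`, `M̃ = A X̃² Aᵀ`, `a = M̂⁻¹ y` and `b = M̃⁻¹ y`. Since `y = M̃ b = M̂ a`,
`yᵀ (M̂⁻¹ - M̃⁻¹) y = (Aᵀ a)ᵀ (X̃² - X̂²) (Aᵀ b)`, so by Cauchy–Schwarz its modulus is at most
`‖x̂² - x̃²‖_∞ λ_max(AAᵀ) ‖a‖ ‖b‖`. Both `M̂` and `M̃` have Rayleigh quotients at least
`α = x_min² λ_min(AAᵀ)`, hence `α ‖a‖ ≤ ‖y‖` and `α ‖b‖ ≤ ‖y‖`; and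
`‖y‖² = ‖A X_o w‖² ≤ λ_max(AAᵀ) x_max² ‖w‖²`. Averaging over `ℓ` gives the bound, even without
the additive `1`.
-/

open Matrix

/-- Largest eigenvalue of a square real matrix (via its real spectrum). -/
noncomputable def lamMax {n : ℕ} (M : Matrix (Fin n) (Fin n) ℝ) : ℝ := sSup (spectrum ℝ M)

/-- Smallest eigenvalue of a square real matrix (via its real spectrum). -/
noncomputable def lamMin {n : ℕ} (M : Matrix (Fin n) (Fin n) ℝ) : ℝ := sInf (spectrum ℝ M)

/-- Entrywise sup-norm of a vector. -/
noncomputable def supNorm {n : ℕ} (v : Fin n → ℝ) : ℝ := ⨆ i, |v i|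

open scoped MatrixOrder

section DotProduct

variable {ι : Type*} [Fintype ι]

theorem dotProduct_self_nonneg (v : ι → ℝ) : 0 ≤ v ⬝ᵥ v :=
  Finset.sum_nonneg fun i _ => mul_self_nonneg (v i)

theorem dotProduct_sq_le (u v : ι → ℝ) : (u ⬝ᵥ v) ^ 2 ≤ (u ⬝ᵥ u) * (v ⬝ᵥ v) := by
  simpa only [dotProduct, sq] using Finset.sum_mul_sq_le_sq_mul_sq Finset.univ u v

theorem sum_mul_mul_sq_le {d p q : ι → ℝ} {c : ℝ} (hd : ∀ i, |d i| ≤ c) :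
    (∑ i, d i * (p i * q i)) ^ 2 ≤ c ^ 2 * ((p ⬝ᵥ p) * (q ⬝ᵥ q)) := by
  have hdp : (fun i => d i * p i) ⬝ᵥ (fun i => d i * p i) ≤ c ^ 2 * (p ⬝ᵥ p) := by
    simp only [dotProduct, Finset.mul_sum]
    refine Finset.sum_le_sum fun i _ => ?_
    have : d i ^ 2 ≤ c ^ 2 := sq_le_sq' (abs_le.mp (hd i)).1 (abs_le.mp (hd i)).2
    nlinarith [mul_self_nonneg (p i)]
  calc (∑ i, d i * (p i * q i)) ^ 2 = ((fun i => d i * p i) ⬝ᵥ q) ^ 2 := by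
        simp only [dotProduct, mul_assoc]
    _ ≤ ((fun i => d i * p i) ⬝ᵥ (fun i => d i * p i)) * (q ⬝ᵥ q) := dotProduct_sq_le _ _
    _ ≤ c ^ 2 * (p ⬝ᵥ p) * (q ⬝ᵥ q) := by gcongr; exact dotProduct_self_nonneg q
    _ = c ^ 2 * ((p ⬝ᵥ p) * (q ⬝ᵥ q)) := by ring

theorem sq_mul_dotProduct_self_le_of_le_dotProduct_mulVec {M : Matrix ι ι ℝ} {α : ℝ}
    (hα : 0 ≤ α) {a : ι → ℝ} (h : α * (a ⬝ᵥ a) ≤ a ⬝ᵥ M *ᵥ a) :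
    α ^ 2 * (a ⬝ᵥ a) ≤ (M *ᵥ a) ⬝ᵥ (M *ᵥ a) := by
  rcases (dotProduct_self_nonneg a).eq_or_lt with ha | ha
  · rw [← ha, mul_zero]; exact dotProduct_self_nonneg _
  refine le_of_mul_le_mul_left ?_ ha
  calc (a ⬝ᵥ a) * (α ^ 2 * (a ⬝ᵥ a)) = (α * (a ⬝ᵥ a)) ^ 2 := by ring
    _ ≤ (a ⬝ᵥ M *ᵥ a) ^ 2 := pow_le_pow_left₀ (by positivity) h 2
    _ ≤ (a ⬝ᵥ a) * ((M *ᵥ a) ⬝ᵥ (M *ᵥ a)) := dotProduct_sq_le _ _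

end DotProduct

section Spectrum

variable {k : ℕ} {M : Matrix (Fin k) (Fin k) ℝ}

theorem Matrix.IsHermitian.dotProduct_mulVec_le_lamMax (hM : M.IsHermitian) (v : Fin k → ℝ) :
    v ⬝ᵥ M *ᵥ v ≤ lamMax M * (v ⬝ᵥ v) := by
  have hle : M ≤ algebraMap ℝ _ (lamMax M) := le_algebraMap_of_spectrum_le
    (fun _ hx => le_csSup M.finite_real_spectrum.bddAbove hx) hM.isSelfAdjoint
  simpa [sub_mulVec, dotProduct_sub, algebraMap_eq_diagonal, Pi.algebraMap_def,
    smul_dotProduct] using (le_iff.mp hle).dotProduct_mulVec_nonneg v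

theorem Matrix.IsHermitian.lamMin_mul_le_dotProduct_mulVec (hM : M.IsHermitian) (v : Fin k → ℝ) :
    lamMin M * (v ⬝ᵥ v) ≤ v ⬝ᵥ M *ᵥ v := by
  have hle : algebraMap ℝ _ (lamMin M) ≤ M := algebraMap_le_of_le_spectrum
    (fun _ hx => csInf_le M.finite_real_spectrum.bddBelow hx) hM.isSelfAdjoint
  simpa [sub_mulVec, dotProduct_sub, algebraMap_eq_diagonal, Pi.algebraMap_def,
    smul_dotProduct] using (le_iff.mp hle).dotProduct_mulVec_nonneg v

theorem Matrix.PosSemidef.lamMax_nonneg (hM : M.PosSemidef) : 0 ≤ lamMax M :=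
  Real.sSup_nonneg fun _ hx => spectrum_nonneg_of_nonneg (nonneg_iff_posSemidef.mpr hM) hx

theorem Matrix.PosDef.lamMin_pos [Nonempty (Fin k)] (hM : M.PosDef) : 0 < lamMin M := by
  obtain ⟨i, hi⟩ : lamMin M ∈ Set.range hM.isHermitian.eigenvalues := by
    rw [← hM.isHermitian.spectrum_real_eq_range_eigenvalues]
    exact Set.Nonempty.csInf_mem
      ⟨_, hM.isHermitian.eigenvalues_mem_spectrum_real (Classical.arbitrary _)⟩
      M.finite_real_spectrum
  exact hi ▸ hM.eigenvalues_pos i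

end Spectrum

section Gram

variable {m : ℕ} {ι : Type*} [Fintype ι] (A : Matrix (Fin m) ι ℝ)

theorem posSemidef_mul_transpose_self : (A * Aᵀ).PosSemidef := by
  simpa using posSemidef_self_mul_conjTranspose A

theorem posDef_mul_transpose_self_of_isUnit_det [DecidableEq ι] {D : Matrix ι ι ℝ}
    (h : IsUnit (A * D * Aᵀ).det) : (A * Aᵀ).PosDef := by
  have hinj : Function.Injective ((fun z => z ᵥ* (D * Aᵀ)) ∘ fun u => u ᵥ* A) := by
    simpa only [Function.comp_def, vecMul_vecMul, Matrix.mul_assoc]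
      using vecMul_injective_iff_isUnit.mpr ((isUnit_iff_isUnit_det _).mpr h)
  simpa using PosDef.mul_conjTranspose_self A hinj.of_comp

theorem transpose_mulVec_dotProduct_self (v : Fin m → ℝ) :
    (Aᵀ *ᵥ v) ⬝ᵥ (Aᵀ *ᵥ v) = v ⬝ᵥ (A * Aᵀ) *ᵥ v := by
  rw [← mulVec_mulVec, dotProduct_mulVec v A, ← mulVec_transpose]

theorem transpose_mulVec_dotProduct_self_le (v : Fin m → ℝ) :
    (Aᵀ *ᵥ v) ⬝ᵥ (Aᵀ *ᵥ v) ≤ lamMax (A * Aᵀ) * (v ⬝ᵥ v) :=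
  transpose_mulVec_dotProduct_self A v ▸
    (posSemidef_mul_transpose_self A).isHermitian.dotProduct_mulVec_le_lamMax v

theorem lamMin_mul_le_transpose_mulVec_dotProduct_self (v : Fin m → ℝ) :
    lamMin (A * Aᵀ) * (v ⬝ᵥ v) ≤ (Aᵀ *ᵥ v) ⬝ᵥ (Aᵀ *ᵥ v) :=
  transpose_mulVec_dotProduct_self A v ▸
    (posSemidef_mul_transpose_self A).isHermitian.lamMin_mul_le_dotProduct_mulVec v

/-- `‖A u‖² = ⟨Aᵀ (A u), u⟩ ≤ ‖Aᵀ (A u)‖ ‖u‖` and `‖Aᵀ (A u)‖² ≤ λ_max(AAᵀ) ‖A u‖²`. -/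
theorem mulVec_dotProduct_self_le (u : ι → ℝ) :
    (A *ᵥ u) ⬝ᵥ (A *ᵥ u) ≤ lamMax (A * Aᵀ) * (u ⬝ᵥ u) := by
  set y := A *ᵥ u
  have hlam := (posSemidef_mul_transpose_self A).lamMax_nonneg
  rcases (dotProduct_self_nonneg y).eq_or_lt with hy | hy
  · rw [← hy]; exact mul_nonneg hlam (dotProduct_self_nonneg u)
  refine le_of_mul_le_mul_left ?_ hy
  calc (y ⬝ᵥ y) * (y ⬝ᵥ y) = ((Aᵀ *ᵥ y) ⬝ᵥ u) ^ 2 := by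
        rw [sq, dotProduct_mulVec, ← mulVec_transpose]
    _ ≤ ((Aᵀ *ᵥ y) ⬝ᵥ (Aᵀ *ᵥ y)) * (u ⬝ᵥ u) := dotProduct_sq_le _ _
    _ ≤ lamMax (A * Aᵀ) * (y ⬝ᵥ y) * (u ⬝ᵥ u) := by
        gcongr
        · exact dotProduct_self_nonneg u
        · exact transpose_mulVec_dotProduct_self_le A y
    _ = (y ⬝ᵥ y) * (lamMax (A * Aᵀ) * (u ⬝ᵥ u)) := by ring

variable [DecidableEq ι]

theorem diagonal_mulVec_dotProduct_self_le {x : ι → ℝ} {r : ℝ} (hx : ∀ i, |x i| ≤ r) (u : ι → ℝ) :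
    (diagonal x *ᵥ u) ⬝ᵥ (diagonal x *ᵥ u) ≤ r ^ 2 * (u ⬝ᵥ u) := by
  simp only [dotProduct, mulVec_diagonal, Finset.mul_sum]
  refine Finset.sum_le_sum fun i _ => ?_
  have : x i ^ 2 ≤ r ^ 2 := sq_le_sq' (abs_le.mp (hx i)).1 (abs_le.mp (hx i)).2
  nlinarith [mul_self_nonneg (u i)]

theorem mulVec_diagonal_mulVec_dotProduct_self_le {x : ι → ℝ} {r : ℝ} (hx : ∀ i, |x i| ≤ r)
    (u : ι → ℝ) :
    (A *ᵥ (diagonal x *ᵥ u)) ⬝ᵥ (A *ᵥ (diagonal x *ᵥ u)) ≤ lamMax (A * Aᵀ) * (r ^ 2 * (u ⬝ᵥ u)) :=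
  (mulVec_dotProduct_self_le A _).trans <| mul_le_mul_of_nonneg_left
    (diagonal_mulVec_dotProduct_self_le hx u) (posSemidef_mul_transpose_self A).lamMax_nonneg

theorem dotProduct_mul_diagonal_mul_transpose_mulVec (d : ι → ℝ) (u v : Fin m → ℝ) :
    u ⬝ᵥ (A * diagonal d * Aᵀ) *ᵥ v = ∑ i, d i * ((Aᵀ *ᵥ u) i * (Aᵀ *ᵥ v) i) := by
  rw [← mulVec_mulVec, ← mulVec_mulVec, dotProduct_mulVec, ← mulVec_transpose]
  simp only [dotProduct, mulVec_diagonal]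
  exact Finset.sum_congr rfl fun i _ => by ring

theorem mul_lamMin_mul_le_dotProduct_mul_diagonal_mul_transpose_mulVec {d : ι → ℝ} {r : ℝ}
    (hr : 0 ≤ r) (hd : ∀ i, r ≤ d i) (v : Fin m → ℝ) :
    r * lamMin (A * Aᵀ) * (v ⬝ᵥ v) ≤ v ⬝ᵥ (A * diagonal d * Aᵀ) *ᵥ v := by
  rw [dotProduct_mul_diagonal_mul_transpose_mulVec, mul_assoc]
  calc r * (lamMin (A * Aᵀ) * (v ⬝ᵥ v)) ≤ r * ((Aᵀ *ᵥ v) ⬝ᵥ (Aᵀ *ᵥ v)) :=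
        mul_le_mul_of_nonneg_left (lamMin_mul_le_transpose_mulVec_dotProduct_self A v) hr
    _ ≤ ∑ i, d i * ((Aᵀ *ᵥ v) i * (Aᵀ *ᵥ v) i) := by
        rw [dotProduct, Finset.mul_sum]
        exact Finset.sum_le_sum fun i _ => mul_le_mul_of_nonneg_right (hd i) (mul_self_nonneg _)

end Gram

section Resolvent

variable {m : ℕ} {ι : Type*} [Fintype ι] [DecidableEq ι] (A : Matrix (Fin m) ι ℝ)
  {d₁ d₂ : ι → ℝ}

/-- With `a = M₁⁻¹ y` and `b = M₂⁻¹ y`, `yᵀ M₁⁻¹ y = (M₂ b)ᵀ a` and `yᵀ M₂⁻¹ y = (M₁ a)ᵀ b`,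
and both are read off the sandwich formula. -/
theorem dotProduct_inv_sub_inv_mulVec (h₁ : IsUnit (A * diagonal d₁ * Aᵀ).det)
    (h₂ : IsUnit (A * diagonal d₂ * Aᵀ).det) (y : Fin m → ℝ) :
    y ⬝ᵥ ((A * diagonal d₁ * Aᵀ)⁻¹ - (A * diagonal d₂ * Aᵀ)⁻¹) *ᵥ y =
      ∑ i, (d₂ - d₁) i * ((Aᵀ *ᵥ ((A * diagonal d₁ * Aᵀ)⁻¹ *ᵥ y)) i *
        (Aᵀ *ᵥ ((A * diagonal d₂ * Aᵀ)⁻¹ *ᵥ y)) i) := by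
  set a := (A * diagonal d₁ * Aᵀ)⁻¹ *ᵥ y
  set b := (A * diagonal d₂ * Aᵀ)⁻¹ *ᵥ y
  have ha : (A * diagonal d₁ * Aᵀ) *ᵥ a = y := by
    rw [mulVec_mulVec, mul_nonsing_inv _ h₁, one_mulVec]
  have hb : (A * diagonal d₂ * Aᵀ) *ᵥ b = y := by
    rw [mulVec_mulVec, mul_nonsing_inv _ h₂, one_mulVec]
  calc y ⬝ᵥ ((A * diagonal d₁ * Aᵀ)⁻¹ - (A * diagonal d₂ * Aᵀ)⁻¹) *ᵥ y = y ⬝ᵥ a - y ⬝ᵥ b := by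
        rw [sub_mulVec, dotProduct_sub]
    _ = ((A * diagonal d₂ * Aᵀ) *ᵥ b) ⬝ᵥ a - ((A * diagonal d₁ * Aᵀ) *ᵥ a) ⬝ᵥ b := by
        rw [ha, hb]
    _ = a ⬝ᵥ (A * diagonal d₂ * Aᵀ) *ᵥ b - b ⬝ᵥ (A * diagonal d₁ * Aᵀ) *ᵥ a := by
        rw [dotProduct_comm _ a, dotProduct_comm _ b]
    _ = _ := by
        simp only [dotProduct_mul_diagonal_mul_transpose_mulVec, ← Finset.sum_sub_distrib]
        exact Finset.sum_congr rfl fun i _ => by simp only [Pi.sub_apply]; ring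

theorem abs_dotProduct_inv_sub_inv_mulVec_mul_sq_le {α c : ℝ} (hα : 0 ≤ α) (hc : 0 ≤ c)
    (hd : ∀ i, |d₁ i - d₂ i| ≤ c)
    (hα₁ : ∀ v, α * (v ⬝ᵥ v) ≤ v ⬝ᵥ (A * diagonal d₁ * Aᵀ) *ᵥ v)
    (hα₂ : ∀ v, α * (v ⬝ᵥ v) ≤ v ⬝ᵥ (A * diagonal d₂ * Aᵀ) *ᵥ v)
    (h₁ : IsUnit (A * diagonal d₁ * Aᵀ).det) (h₂ : IsUnit (A * diagonal d₂ * Aᵀ).det)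
    (y : Fin m → ℝ) :
    |y ⬝ᵥ ((A * diagonal d₁ * Aᵀ)⁻¹ - (A * diagonal d₂ * Aᵀ)⁻¹) *ᵥ y| * α ^ 2 ≤
      c * lamMax (A * Aᵀ) * (y ⬝ᵥ y) := by
  set a := (A * diagonal d₁ * Aᵀ)⁻¹ *ᵥ y
  set b := (A * diagonal d₂ * Aᵀ)⁻¹ *ᵥ y
  set q := y ⬝ᵥ ((A * diagonal d₁ * Aᵀ)⁻¹ - (A * diagonal d₂ * Aᵀ)⁻¹) *ᵥ y
  set lam := lamMax (A * Aᵀ)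
  have hlam : 0 ≤ lam := (posSemidef_mul_transpose_self A).lamMax_nonneg
  have ha : α ^ 2 * (a ⬝ᵥ a) ≤ y ⬝ᵥ y := by
    simpa only [a, mulVec_mulVec, mul_nonsing_inv _ h₁, one_mulVec]
      using sq_mul_dotProduct_self_le_of_le_dotProduct_mulVec hα (hα₁ a)
  have hb : α ^ 2 * (b ⬝ᵥ b) ≤ y ⬝ᵥ y := by
    simpa only [b, mulVec_mulVec, mul_nonsing_inv _ h₂, one_mulVec]
      using sq_mul_dotProduct_self_le_of_le_dotProduct_mulVec hα (hα₂ b)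
  have hq : q ^ 2 ≤ c ^ 2 * (lam * (a ⬝ᵥ a) * (lam * (b ⬝ᵥ b))) := by
    rw [show q = _ from dotProduct_inv_sub_inv_mulVec A h₁ h₂ y]
    refine (sum_mul_mul_sq_le (c := c) fun i => ?_).trans ?_
    · rw [Pi.sub_apply, abs_sub_comm]; exact hd i
    · exact mul_le_mul_of_nonneg_left (mul_le_mul (transpose_mulVec_dotProduct_self_le A a)
        (transpose_mulVec_dotProduct_self_le A b) (dotProduct_self_nonneg _)
        (mul_nonneg hlam (dotProduct_self_nonneg a))) (sq_nonneg c)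
  have hy := dotProduct_self_nonneg y
  rw [← abs_of_nonneg (sq_nonneg α), ← abs_mul]
  refine abs_le_of_sq_le_sq ?_ (by positivity)
  calc (q * α ^ 2) ^ 2 = q ^ 2 * (α ^ 2) ^ 2 := by ring
    _ ≤ c ^ 2 * (lam * (a ⬝ᵥ a) * (lam * (b ⬝ᵥ b))) * (α ^ 2) ^ 2 := by gcongr
    _ = (c * lam) ^ 2 * ((α ^ 2 * (a ⬝ᵥ a)) * (α ^ 2 * (b ⬝ᵥ b))) := by ring
    _ ≤ (c * lam) ^ 2 * ((y ⬝ᵥ y) * (y ⬝ᵥ y)) := by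
        gcongr
        exact mul_nonneg (by positivity) (dotProduct_self_nonneg b)
    _ = (c * lam * (y ⬝ᵥ y)) ^ 2 := by ring

end Resolvent

theorem abs_le_supNorm {n : ℕ} (v : Fin n → ℝ) (i : Fin n) : |v i| ≤ supNorm v :=
  le_ciSup (f := fun i => |v i|) (Set.finite_range _).bddAbove i

theorem supNorm_nonneg {n : ℕ} (v : Fin n → ℝ) : 0 ≤ supNorm v :=
  Real.iSup_nonneg fun i => abs_nonneg (v i)

theorem abs_dotProduct_inv_sub_inv_mulVec_le {m n : ℕ} (A : Matrix (Fin m) (Fin n) ℝ)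
    {xh xt : Fin n → ℝ} {xmin : ℝ} (hmin : 0 < xmin) (hxh : ∀ i, xmin ≤ xh i)
    (hxt : ∀ i, xmin ≤ xt i) (hinvh : IsUnit (A * diagonal (xh ^ 2) * Aᵀ).det)
    (hinvt : IsUnit (A * diagonal (xt ^ 2) * Aᵀ).det) (y : Fin m → ℝ) :
    |y ⬝ᵥ ((A * diagonal (xh ^ 2) * Aᵀ)⁻¹ - (A * diagonal (xt ^ 2) * Aᵀ)⁻¹) *ᵥ y| ≤
      lamMax (A * Aᵀ) * supNorm (fun i => xh i ^ 2 - xt i ^ 2) /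
        (xmin ^ 4 * lamMin (A * Aᵀ) ^ 2) * (y ⬝ᵥ y) := by
  rcases isEmpty_or_nonempty (Fin m) with hm | hm
  · simp [Subsingleton.elim y 0]
  set α := xmin ^ 2 * lamMin (A * Aᵀ)
  have hα : 0 < α :=
    mul_pos (pow_pos hmin 2) (posDef_mul_transpose_self_of_isUnit_det A hinvh).lamMin_pos
  have hRayleigh {x : Fin n → ℝ} (hx : ∀ i, xmin ≤ x i) (v : Fin m → ℝ) :
      α * (v ⬝ᵥ v) ≤ v ⬝ᵥ (A * diagonal (x ^ 2) * Aᵀ) *ᵥ v :=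
    mul_lamMin_mul_le_dotProduct_mul_diagonal_mul_transpose_mulVec A (sq_nonneg xmin)
      (fun i => pow_le_pow_left₀ hmin.le (hx i) 2) v
  rw [show xmin ^ 4 * lamMin (A * Aᵀ) ^ 2 = α ^ 2 by ring, div_mul_eq_mul_div,
    le_div_iff₀ (pow_pos hα 2)]
  calc _ ≤ _ := abs_dotProduct_inv_sub_inv_mulVec_mul_sq_le A hα.le (supNorm_nonneg _)
        (fun i => abs_le_supNorm (fun i => xh i ^ 2 - xt i ^ 2) i) (hRayleigh hxh)
        (hRayleigh hxt) hinvh hinvt y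
    _ = _ := by ring

theorem quadform_diff_bound_general {m n L : ℕ} (A : Matrix (Fin m) (Fin n) ℝ)
    (xh xt xo : Fin n → ℝ) (xmin xmax σw : ℝ) (hmin : 0 < xmin)
    (hxh : ∀ i, xh i ∈ Set.Icc xmin xmax) (hxt : ∀ i, xt i ∈ Set.Icc xmin xmax)
    (hxo : ∀ i, xo i ∈ Set.Icc xmin xmax)
    (hinvh : IsUnit (A * (Matrix.diagonal xh) ^ 2 * Aᵀ).det)
    (hinvt : IsUnit (A * (Matrix.diagonal xt) ^ 2 * Aᵀ).det)
    (w : Fin L → Fin n → ℝ) :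
    let Sh := (A * (Matrix.diagonal xh) ^ 2 * Aᵀ)⁻¹
    let St := (A * (Matrix.diagonal xt) ^ 2 * Aᵀ)⁻¹
    let y : Fin L → Fin m → ℝ := fun ℓ => A.mulVec ((Matrix.diagonal xo).mulVec (w ℓ))
    |(1 / ((L : ℝ) * σw ^ 2)) * ∑ ℓ, (y ℓ) ⬝ᵥ (Sh - St).mulVec (y ℓ)| ≤
      (xmax ^ 2 * (lamMax (A * Aᵀ)) ^ 2 * supNorm (fun i => (xh i) ^ 2 - (xt i) ^ 2) /
          (xmin ^ 4 * (lamMin (A * Aᵀ)) ^ 2)) *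
        (1 + (1 / ((L : ℝ) * σw ^ 2)) * ∑ ℓ, (w ℓ) ⬝ᵥ (w ℓ)) := by
  intro Sh St y
  simp only [Sh, St, diagonal_pow] at hinvh hinvt ⊢
  set K := lamMax (A * Aᵀ) * supNorm (fun i => xh i ^ 2 - xt i ^ 2) /
    (xmin ^ 4 * lamMin (A * Aᵀ) ^ 2)
  have hK : 0 ≤ K := div_nonneg (mul_nonneg (posSemidef_mul_transpose_self A).lamMax_nonneg
    (supNorm_nonneg _)) (by positivity)
  have hterm (ℓ : Fin L) : |y ℓ ⬝ᵥ ((A * diagonal (xh ^ 2) * Aᵀ)⁻¹ -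
      (A * diagonal (xt ^ 2) * Aᵀ)⁻¹) *ᵥ y ℓ| ≤ K * (lamMax (A * Aᵀ) * (xmax ^ 2 * (w ℓ ⬝ᵥ w ℓ))) :=
    (abs_dotProduct_inv_sub_inv_mulVec_le A hmin (fun i => (hxh i).1) (fun i => (hxt i).1)
      hinvh hinvt (y ℓ)).trans <| mul_le_mul_of_nonneg_left
        (mulVec_diagonal_mulVec_dotProduct_self_le A (fun i =>
          (abs_of_pos (hmin.trans_le (hxo i).1)).trans_le (hxo i).2) (w ℓ)) hK
  calc _ ≤ 1 / ((L : ℝ) * σw ^ 2) * ∑ ℓ, K * (lamMax (A * Aᵀ) * (xmax ^ 2 * (w ℓ ⬝ᵥ w ℓ))) := by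
        rw [abs_mul, abs_of_nonneg (by positivity)]
        gcongr
        exact (Finset.abs_sum_le_sum_abs _ _).trans (Finset.sum_le_sum fun ℓ _ => hterm ℓ)
    _ = xmax ^ 2 * lamMax (A * Aᵀ) ^ 2 * supNorm (fun i => xh i ^ 2 - xt i ^ 2) /
          (xmin ^ 4 * lamMin (A * Aᵀ) ^ 2) * (1 / ((L : ℝ) * σw ^ 2) * ∑ ℓ, w ℓ ⬝ᵥ w ℓ) := by
        simp only [K, ← Finset.mul_sum]; ring
    _ ≤ _ := by
        gcongr
        · exact div_nonneg (mul_nonneg (by positivity) (supNorm_nonneg _)) (by positivity)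
        · linarith

/-- Deterministic bound on the empirical quadratic form of `Σ̂ − Σ̃`:
`|(1/(Lσw²)) ∑ₗ yₗᵀ(Σ̂ − Σ̃)yₗ| ≤ (x_max² λ_max²(AAᵀ) ‖x̂² − x̃²‖_∞ / (x_min⁴ λ_min²(AAᵀ)))
· (1 + (1/(Lσw²)) ∑ₗ wₗᵀwₗ)`, where `yₗ = A X₀ wₗ`. -/
theorem quadform_diff_bound {m n L : ℕ} (A : Matrix (Fin m) (Fin n) ℝ)
    (xh xt xo : Fin n → ℝ) (xmin xmax σw : ℝ) (hmin : 0 < xmin) (hmm : xmin ≤ xmax)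
    (hσw : 0 < σw) (hL : 0 < L)
    (hxh : ∀ i, xh i ∈ Set.Icc xmin xmax) (hxt : ∀ i, xt i ∈ Set.Icc xmin xmax)
    (hxo : ∀ i, xo i ∈ Set.Icc xmin xmax)
    (hinvh : IsUnit (A * (Matrix.diagonal xh) ^ 2 * Aᵀ).det)
    (hinvt : IsUnit (A * (Matrix.diagonal xt) ^ 2 * Aᵀ).det)
    (w : Fin L → Fin n → ℝ) :
    let Sh := (A * (Matrix.diagonal xh) ^ 2 * Aᵀ)⁻¹
    let St := (A * (Matrix.diagonal xt) ^ 2 * Aᵀ)⁻¹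
    let y : Fin L → Fin m → ℝ := fun ℓ => A.mulVec ((Matrix.diagonal xo).mulVec (w ℓ))
    |(1 / ((L : ℝ) * σw ^ 2)) * ∑ ℓ, (y ℓ) ⬝ᵥ (Sh - St).mulVec (y ℓ)| ≤
      (xmax ^ 2 * (lamMax (A * Aᵀ)) ^ 2 * supNorm (fun i => (xh i) ^ 2 - (xt i) ^ 2) /
          (xmin ^ 4 * (lamMin (A * Aᵀ)) ^ 2)) *
        (1 + (1 / ((L : ℝ) * σw ^ 2)) * ∑ ℓ, (w ℓ) ⬝ᵥ (w ℓ)) :=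
  quadform_diff_bound_general A xh xt xo xmin xmax σw hmin hxh hxt hxo hinvh hinvt w
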